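/- arXiv:2012.13306 — 2 statements merged into one kernel-verified Lean document; each statement's English description precedes it below -/
import Mathlib

section
/- Let h be a chaining functional of log-concave type. Then h is sub-multiplicative: for all a, b ∈ (0,1], h(a·b) ≤ h(a) + h(b). -/
open MeasureTheory

noncomputable section

/-- `f` is log-concave on `[0,∞)`. -/
def IsLogConcaveOn (f : ℝ → ℝ) : Prop :=
  ∀ x ∈ Set.Ici (0:ℝ), ∀ y ∈ Set.Ici (0:ℝ), ∀ t ∈ Set.Icc (0:ℝ) 1,
    f x ^ t * f y ^ (1 - t) ≤ f (t * x + (1 - t) * y)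

/-- `f` is a continuous, non-increasing, log-concave probability density on `[0,∞)`
normalized so that `f 0 = 1`. -/
structure IsChainingDensity (f : ℝ → ℝ) : Prop where
  nonneg : ∀ t : ℝ, 0 ≤ t → 0 ≤ f t
  continuousOn : ContinuousOn f (Set.Ici 0)
  antitoneOn : AntitoneOn f (Set.Ici 0)
  logConcave : IsLogConcaveOn f
  total : (∫ t in Set.Ioi (0:ℝ), f t) = 1
  normalized : f 0 = 1

/-- The complementary cumulative distribution function `F(s) = ∫_s^∞ f(t) dt`. -/
def ccdf (f : ℝ → ℝ) (s : ℝ) : ℝ := ∫ t in Set.Ioi s, f t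

/-- The chaining functional `h(p) = F⁻¹(p)`, defined on `(0,1]` as the least
`s ≥ 0` with `F(s) ≤ p`. -/
def chainFn (f : ℝ → ℝ) (p : ℝ) : ℝ := sInf {s : ℝ | 0 ≤ s ∧ ccdf f s ≤ p}

/-!
Write `F = ccdf f`. For `x ≤ u ≤ y` with `u + v = x + y`, log-concavity gives
`f x * f y ≤ f u * f v`. Integrating this over `u > t` and over `v ∈ [0, t]` yields
`f t * F (s + t) ≤ f (s + t) * F t` and `f (s + t) * ∫₀ᵗ f ≤ f t * ∫ₛ^{s+t} f`; together with
`F 0 = 1` they give `F (s + t) ≤ F s * F t` whenever `f t > 0` (and `F (s + t) = 0` otherwise,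
`f` being non-increasing). Hence `F s ≤ a` and `F t ≤ b` imply `F (s + t) ≤ a * b`, and taking
infima, `h (a * b) ≤ h a + h b`.
-/

open Set Filter Pointwise

theorem setIntegral_Ioi_comp_add_right {E : Type*} [NormedAddCommGroup E] [NormedSpace ℝ E]
    (g : ℝ → E) (a c : ℝ) : ∫ x in Ioi a, g (x + c) = ∫ x in Ioi (a + c), g x := by
  calc ∫ x in Ioi a, g (x + c) = ∫ x, (Ioi (a + c)).indicator g (x + c) := by
        rw [← integral_indicator measurableSet_Ioi]
        congr 1 with x
        simp only [indicator_apply, mem_Ioi, add_lt_add_iff_right]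
    _ = ∫ x in Ioi (a + c), g x := by
        rw [integral_add_right_eq_self (fun x => (Ioi (a + c)).indicator g x) c,
          integral_indicator measurableSet_Ioi]

theorem sInf_sublevel_mul_le_add {F : ℝ → ℝ} (hF_nonneg : ∀ s, 0 ≤ s → 0 ≤ F s)
    (hF_mul : ∀ s t, 0 ≤ s → 0 ≤ t → F (s + t) ≤ F s * F t) {a b : ℝ}
    (ha : {s | 0 ≤ s ∧ F s ≤ a}.Nonempty) (hb : {s | 0 ≤ s ∧ F s ≤ b}.Nonempty) :
    sInf {s | 0 ≤ s ∧ F s ≤ a * b} ≤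
      sInf {s | 0 ≤ s ∧ F s ≤ a} + sInf {s | 0 ≤ s ∧ F s ≤ b} := by
  have hbdd : ∀ p, BddBelow {s | 0 ≤ s ∧ F s ≤ p} := fun p => ⟨0, fun s hs => hs.1⟩
  rw [← csInf_add ha (hbdd a) hb (hbdd b)]
  refine csInf_le_csInf (hbdd _) (ha.add hb) ?_
  rintro _ ⟨s, ⟨hs, hFs⟩, t, ⟨ht, hFt⟩, rfl⟩
  exact ⟨add_nonneg hs ht, (hF_mul s t hs ht).trans
    (mul_le_mul hFs hFt (hF_nonneg t ht) ((hF_nonneg s hs).trans hFs))⟩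

theorem ccdf_sublevel_nonempty (f : ℝ → ℝ) {p : ℝ} (hp : 0 < p) :
    {s | 0 ≤ s ∧ ccdf f s ≤ p}.Nonempty := by
  obtain ⟨s, hsp, hs⟩ := (((tendsto_integral_Ioi_zero tendsto_id).eventually
    (ge_mem_nhds hp)).and (eventually_ge_atTop 0)).exists
  exact ⟨s, hs, hsp⟩

theorem IsLogConcaveOn.mul_le_mul_of_add_eq {f : ℝ → ℝ} (hlc : IsLogConcaveOn f)
    (hf : ∀ t, 0 ≤ t → 0 ≤ f t) {x y u v : ℝ} (hx : 0 ≤ x) (hxu : x ≤ u) (huy : u ≤ y)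
    (hsum : u + v = x + y) : f x * f y ≤ f u * f v := by
  rcases (hxu.trans huy).eq_or_lt with rfl | hxy
  · obtain rfl : u = x := le_antisymm huy hxu
    obtain rfl : v = u := by linarith
    rfl
  have hy : 0 ≤ y := hx.trans hxy.le
  set θ := (y - u) / (y - x)
  have hθ : θ ∈ Icc (0 : ℝ) 1 :=
    ⟨div_nonneg (by linarith) (by linarith), (div_le_one (by linarith)).2 (by linarith)⟩
  have hθ' : 1 - θ ∈ Icc (0 : ℝ) 1 := ⟨by linarith [hθ.2], by linarith [hθ.1]⟩
  have hu : θ * x + (1 - θ) * y = u := by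
    simp only [θ]; field_simp [(sub_pos.2 hxy).ne']; ring
  have hv : (1 - θ) * x + (1 - (1 - θ)) * y = v := by linarith
  have split_pow : ∀ z : ℝ, 0 ≤ z → z ^ θ * z ^ (1 - θ) = z := fun z hz => by
    rw [← Real.rpow_add' hz (by norm_num), add_sub_cancel, Real.rpow_one]
  calc f x * f y
      = (f x ^ θ * f y ^ (1 - θ)) * (f x ^ (1 - θ) * f y ^ (1 - (1 - θ))) := by
        rw [sub_sub_cancel, mul_mul_mul_comm, split_pow _ (hf x hx), mul_comm (f y ^ _),
          split_pow _ (hf y hy)]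
    _ ≤ f u * f v := by
        refine mul_le_mul ?_ ?_
          (mul_nonneg (Real.rpow_nonneg (hf x hx) _) (Real.rpow_nonneg (hf y hy) _))
          (hf u (hx.trans hxu))
        · simpa only [hu] using hlc x hx y hy θ hθ
        · simpa only [hv] using hlc x hx y hy (1 - θ) hθ'

namespace IsChainingDensity

variable {f : ℝ → ℝ} (hf : IsChainingDensity f)
include hf

theorem integrableOn_Ioi {s : ℝ} (hs : 0 ≤ s) : IntegrableOn f (Ioi s) :=
  IntegrableOn.mono_set (integrable_of_integral_eq_one hf.total) (Ioi_subset_Ioi hs)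

theorem intervalIntegrable {a b : ℝ} (ha : 0 ≤ a) (hab : a ≤ b) :
    IntervalIntegrable f volume a b :=
  (intervalIntegrable_iff_integrableOn_Ioc_of_le hab).2
    ((hf.integrableOn_Ioi ha).mono_set Ioc_subset_Ioi_self)

theorem ccdf_nonneg {s : ℝ} (hs : 0 ≤ s) : 0 ≤ ccdf f s :=
  setIntegral_nonneg measurableSet_Ioi fun _ hx => hf.nonneg _ (hs.trans (le_of_lt hx))

theorem ccdf_eq_intervalIntegral_add {a b : ℝ} (ha : 0 ≤ a) (hab : a ≤ b) :
    ccdf f a = (∫ x in a..b, f x) + ccdf f b :=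
  (intervalIntegral.integral_interval_add_Ioi (hf.integrableOn_Ioi ha)
    (hf.integrableOn_Ioi (ha.trans hab))).symm

theorem ccdf_eq_zero_of_eq_zero {t s : ℝ} (ht : 0 ≤ t) (hft : f t = 0) (hts : t ≤ s) :
    ccdf f s = 0 :=
  setIntegral_eq_zero_of_forall_eq_zero fun u (hu : s < u) =>
    le_antisymm (hft ▸ hf.antitoneOn ht (ht.trans (hts.trans hu.le)) (hts.trans hu.le))
      (hf.nonneg u (ht.trans (hts.trans hu.le)))

theorem ccdf_zero : ccdf f 0 = 1 :=
  hf.total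

theorem mul_ccdf_add_le_mul_ccdf {s t : ℝ} (hs : 0 ≤ s) (ht : 0 ≤ t) :
    f t * ccdf f (s + t) ≤ f (s + t) * ccdf f t := by
  have shift : ccdf f (s + t) = ∫ u in Ioi t, f (u + s) := by
    rw [add_comm, ccdf, setIntegral_Ioi_comp_add_right]
  rw [shift, ccdf, ← integral_const_mul, ← integral_const_mul]
  refine integral_mono_of_nonneg (ae_restrict_of_forall_mem measurableSet_Ioi fun u hu => ?_)
    ((hf.integrableOn_Ioi ht).const_mul _)
    (ae_restrict_of_forall_mem measurableSet_Ioi fun u (hu : t < u) => ?_)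
  · exact mul_nonneg (hf.nonneg t ht) (hf.nonneg _ (by linarith [mem_Ioi.1 hu]))
  · exact hf.logConcave.mul_le_mul_of_add_eq hf.nonneg ht (by linarith) (by linarith) (by ring)

theorem mul_intervalIntegral_le_mul_intervalIntegral_add {s t : ℝ} (hs : 0 ≤ s) (ht : 0 ≤ t) :
    f (s + t) * ∫ v in 0..t, f v ≤ f t * ∫ x in s..s + t, f x := by
  have shift : ∫ x in s..s + t, f x = ∫ v in 0..t, f (v + s) := by
    rw [intervalIntegral.integral_comp_add_right, zero_add, add_comm]
  have hshift_int : IntervalIntegrable (fun v => f (v + s)) volume 0 t := by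
    simpa using (hf.intervalIntegrable hs (le_add_of_nonneg_right ht)).comp_add_right s
  rw [shift, ← intervalIntegral.integral_const_mul, ← intervalIntegral.integral_const_mul]
  refine intervalIntegral.integral_mono_on ht ((hf.intervalIntegrable le_rfl ht).const_mul _)
    (hshift_int.const_mul _) fun v hv => ?_
  rw [mul_comm]
  exact hf.logConcave.mul_le_mul_of_add_eq hf.nonneg hv.1 hv.2 (le_add_of_nonneg_left hs)
    (by ring)

theorem ccdf_add_le_mul {s t : ℝ} (hs : 0 ≤ s) (ht : 0 ≤ t) :
    ccdf f (s + t) ≤ ccdf f s * ccdf f t := by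
  rcases (hf.nonneg t ht).eq_or_lt with hft | hft
  · rw [hf.ccdf_eq_zero_of_eq_zero ht hft.symm (le_add_of_nonneg_left hs)]
    exact mul_nonneg (hf.ccdf_nonneg hs) (hf.ccdf_nonneg ht)
  have tail := hf.mul_ccdf_add_le_mul_ccdf hs ht
  have head := hf.mul_intervalIntegral_le_mul_intervalIntegral_add hs ht
  have split_s := hf.ccdf_eq_intervalIntegral_add hs (le_add_of_nonneg_right ht)
  have split_0 := hf.ccdf_eq_intervalIntegral_add le_rfl ht
  rw [hf.ccdf_zero] at split_0
  have hI : 0 ≤ ∫ v in 0..t, f v :=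
    intervalIntegral.integral_nonneg ht fun v hv => hf.nonneg v hv.1
  refine le_of_mul_le_mul_left ?_ hft
  rw [split_s]
  linear_combination (f t * ccdf f (s + t)) * split_0 + mul_le_mul_of_nonneg_right tail hI +
    mul_le_mul_of_nonneg_left head (hf.ccdf_nonneg ht)

end IsChainingDensity

/-- a chaining functional of log-concave type is sub-multiplicative:
for all `a, b ∈ (0,1]`, `h(a·b) ≤ h(a) + h(b)`. -/
theorem chainFn_submultiplicative (f : ℝ → ℝ) (hf : IsChainingDensity f)
    (a b : ℝ) (ha : a ∈ Set.Ioc (0:ℝ) 1) (hb : b ∈ Set.Ioc (0:ℝ) 1) :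
    chainFn f (a * b) ≤ chainFn f a + chainFn f b :=
  sInf_sublevel_mul_le_add (fun _ => hf.ccdf_nonneg) (fun _ _ => hf.ccdf_add_le_mul)
    (ccdf_sublevel_nonempty f ha.1) (ccdf_sublevel_nonempty f hb.1)
end
end

section
/- Let (X,d) be a finite metric space and h a chaining functional of log-concave type. For every probability measure ν on X, Σ_{x∈X} ν(x)·∫₀^∞ h(ν(B(x,r))) dr ≤ 2·inf_μ Σ_{x∈X} ν(x)·∫₀^∞ h(μ(B(x,r))) dr + diam(X)/e, where the infimum is taken over all probability measures μ on X (with the conventions 0·∞ = 0 and h(0) := lim_{p→0⁺} h(p) ∈ (0,∞]). -/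
open MeasureTheory

noncomputable section

open scoped ENNReal

/-- The extended (`[0,∞]`-valued) chaining functional: `h(p)` is the least `s ≥ 0`
with `F(s) ≤ p`, and `+∞` when no such `s` exists (in particular
`h(0) = lim_{p→0⁺} h(p) ∈ (0,∞]`). -/
def chainFnE (f : ℝ → ℝ) (p : ℝ) : ℝ≥0∞ :=
  sInf {t : ℝ≥0∞ | ∃ s : ℝ, 0 ≤ s ∧ ccdf f s ≤ p ∧ t = ENNReal.ofReal s}

/-- A probability measure on a finite set, given by its point masses. -/
def IsProbOn {X : Type*} [Fintype X] (μ : X → ℝ) : Prop :=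
  (∀ x, 0 ≤ μ x) ∧ (∑ x, μ x) = 1

/-- The mass `μ(B(x,r))` of the closed ball of radius `r` around `x`. -/
def ballMass {X : Type*} [MetricSpace X] [Fintype X] (μ : X → ℝ) (x : X) (r : ℝ) : ℝ :=
  ∑ y ∈ Finset.univ.filter (fun y => dist x y ≤ r), μ y

/-- `∫₀^∞ h(μ(B(x,r))) dr`, valued in `[0,∞]`. -/
def Hint {X : Type*} [MetricSpace X] [Fintype X] (f : ℝ → ℝ) (μ : X → ℝ) (x : X) : ℝ≥0∞ :=
  ∫⁻ r in Set.Ioi (0:ℝ), chainFnE f (ballMass μ x r)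

/-- The diameter of the finite metric space `X`. -/
def fdiam (X : Type*) [MetricSpace X] : ℝ := Metric.diam (Set.univ : Set X)

/-!
Log-concavity of `f` together with `f 0 = 1` makes `f` submultiplicative, hence
`F(s) = ∫₀^∞ f(s + u) du ≤ f(s) = -F'(s)`, so `eˢ F(s)` is non-increasing and
`F(s + c) ≤ e⁻ᶜ F(s)`; inverting, `h(p') ≤ h(p) + log (p / p')` for `p' ≤ p`.
Substituting `r ↦ 2r`,
`∫ h(ν(B(x,r))) dr = 2 ∫ h(ν(B(x,2r))) dr`
`  ≤ 2 ∫ h(μ(B(x,r))) dr + 2 ∫ log⁺ (μ(B(x,r)) / ν(B(x,2r))) dr`.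
For each `r` the `ν`-average of the last integrand is at most `1/e` by a greedy Vitali argument
(using `log y ≤ y / e`), and it vanishes once `2r ≥ diam X`; this gives the error `diam X / e`.
-/

open Real Set

lemma ccdf_eq_setIntegral_comp_add_right (f : ℝ → ℝ) (s : ℝ) :
    ccdf f s = ∫ u in Ioi 0, f (u + s) := by
  rw [ccdf, ← sub_self s, ← preimage_add_const_Ioi,
    ← (measurableEmbedding_addRight s).setIntegral_map, map_add_right_eq_self]

namespace IsChainingDensity

variable {f : ℝ → ℝ}

lemma integrableOn_Ioi_s3 (hf : IsChainingDensity f) : IntegrableOn f (Ioi 0) := by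
  by_contra h
  simpa [integral_undef h] using hf.total

lemma map_add_le_mul (hf : IsChainingDensity f) {x y : ℝ} (hx : 0 ≤ x) (hy : 0 ≤ y) :
    f (x + y) ≤ f x * f y := by
  rcases le_or_gt (f (x + y)) 0 with hle | hpos
  · exact hle.trans (mul_nonneg (hf.nonneg x hx) (hf.nonneg y hy))
  have hxy : x + y = 0 → x = 0 ∧ y = 0 := fun h => ⟨by linarith, by linarith⟩
  set t := x / (x + y)
  have hfx := hf.logConcave (x + y) (add_nonneg hx hy) 0 self_mem_Ici t
    ⟨by positivity, div_le_one_of_le₀ (by linarith) (by positivity)⟩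
  have hfy := hf.logConcave (x + y) (add_nonneg hx hy) 0 self_mem_Ici (1 - t)
    ⟨sub_nonneg.2 (div_le_one_of_le₀ (by linarith) (by positivity)), by simp; positivity⟩
  rw [mul_zero, add_zero, div_mul_cancel_of_imp (fun h => (hxy h).1), hf.normalized,
    one_rpow, mul_one] at hfx
  rw [mul_zero, add_zero, sub_mul, div_mul_cancel_of_imp (fun h => (hxy h).1), one_mul,
    add_sub_cancel_left, hf.normalized, one_rpow, mul_one] at hfy
  calc f (x + y) = f (x + y) ^ t * f (x + y) ^ (1 - t) := by
        rw [← rpow_add hpos, add_sub_cancel, rpow_one]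
    _ ≤ f x * f y := mul_le_mul hfx hfy (by positivity) (hf.nonneg x hx)

lemma ccdf_le (hf : IsChainingDensity f) {s : ℝ} (hs : 0 ≤ s) : ccdf f s ≤ f s := by
  calc ccdf f s = ∫ u in Ioi 0, f (u + s) := ccdf_eq_setIntegral_comp_add_right f s
    _ ≤ ∫ u in Ioi 0, f s * f u := by
        refine integral_mono_of_nonneg ?_ (hf.integrableOn_Ioi_s3.const_mul _) ?_
        · exact ae_restrict_of_forall_mem measurableSet_Ioi fun u hu =>
            hf.nonneg _ (by linarith [mem_Ioi.1 hu])
        · refine ae_restrict_of_forall_mem measurableSet_Ioi fun u hu => ?_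
          dsimp only
          rw [add_comm]
          exact hf.map_add_le_mul hs (le_of_lt hu)
    _ = f s := by rw [integral_const_mul, hf.total, mul_one]

lemma ccdf_eq_one_sub_intervalIntegral (hf : IsChainingDensity f) {s : ℝ} (hs : 0 ≤ s) :
    ccdf f s = 1 - ∫ t in 0..s, f (max t 0) := by
  have hint := hf.integrableOn_Ioi_s3
  have hsplit := setIntegral_union (Ioc_disjoint_Ioi le_rfl) measurableSet_Ioi
    (hint.mono_set Ioc_subset_Ioi_self) (hint.mono_set (Ioi_subset_Ioi hs))
  rw [Ioc_union_Ioi_eq_Ioi hs, hf.total] at hsplit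
  rw [intervalIntegral.integral_of_le hs, ccdf,
    setIntegral_congr_fun measurableSet_Ioc fun t ht => by rw [max_eq_left ht.1.le]]
  linarith

lemma antitoneOn_exp_mul_ccdf (hf : IsChainingDensity f) :
    AntitoneOn (fun s => exp s * ccdf f s) (Ici 0) := by
  set g : ℝ → ℝ := fun t => f (max t 0)
  have hg : Continuous g :=
    hf.continuousOn.comp_continuous (continuous_id.max continuous_const) fun t => le_max_right t 0
  have hderiv : ∀ s, HasDerivAt (fun s => exp s * (1 - ∫ t in 0..s, g t))
      (exp s * (1 - ∫ t in 0..s, g t) + exp s * -g s) s := fun s =>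
    (hasDerivAt_exp s).mul ((hg.integral_hasStrictDerivAt 0 s).hasDerivAt.const_sub 1)
  have hanti : AntitoneOn (fun s => exp s * (1 - ∫ t in 0..s, g t)) (Ici 0) := by
    refine antitoneOn_of_deriv_nonpos (convex_Ici 0)
      (fun s _ => (hderiv s).continuousAt.continuousWithinAt)
      (fun s _ => (hderiv s).differentiableAt.differentiableWithinAt) fun s hs => ?_
    rw [interior_Ici, mem_Ioi] at hs
    rw [(hderiv s).deriv, ← hf.ccdf_eq_one_sub_intervalIntegral hs.le, ← mul_add]
    have hgs : g s = f s := by simp only [g, max_eq_left hs.le]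
    exact mul_nonpos_of_nonneg_of_nonpos (exp_pos s).le (by linarith [hf.ccdf_le hs.le])
  exact hanti.congr fun s hs => by simp only [hf.ccdf_eq_one_sub_intervalIntegral hs, g]

lemma ccdf_add_le (hf : IsChainingDensity f) {a c : ℝ} (ha : 0 ≤ a) (hc : 0 ≤ c) :
    ccdf f (a + c) ≤ exp (-c) * ccdf f a := by
  have h := hf.antitoneOn_exp_mul_ccdf ha (show 0 ≤ a + c by linarith) (by linarith)
  dsimp only at h
  rw [exp_add, mul_assoc] at h
  rw [exp_neg, inv_mul_eq_div, le_div_iff₀ (exp_pos c), mul_comm]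
  exact le_of_mul_le_mul_left h (exp_pos a)

end IsChainingDensity

lemma chainFnE_antitone (f : ℝ → ℝ) : Antitone (chainFnE f) := by
  refine fun p q hpq => sInf_le_sInf ?_
  rintro t ⟨s, hs, hFs, rfl⟩
  exact ⟨s, hs, hFs.trans hpq, rfl⟩

lemma IsChainingDensity.chainFnE_le_add_log {f : ℝ → ℝ} (hf : IsChainingDensity f) {p' p : ℝ}
    (hp' : 0 < p') (hp'p : p' ≤ p) :
    chainFnE f p' ≤ chainFnE f p + ENNReal.ofReal (log (p / p')) := by
  have hc : 0 ≤ log (p / p') := log_nonneg ((one_le_div hp').2 hp'p)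
  unfold chainFnE
  rw [ENNReal.sInf_add]
  refine le_iInf₂ fun b ⟨s, hs, hFs, hb⟩ => ?_
  have hp : 0 < p := hp'.trans_le hp'p
  have hexp : exp (-log (p / p')) * p = p' := by
    rw [exp_neg, exp_log (div_pos hp hp'), inv_div, div_mul_cancel₀ _ hp.ne']
  have hF : ccdf f (s + log (p / p')) ≤ p' := by
    calc ccdf f (s + log (p / p')) ≤ exp (-log (p / p')) * ccdf f s := hf.ccdf_add_le hs hc
      _ ≤ exp (-log (p / p')) * p := mul_le_mul_of_nonneg_left hFs (exp_pos _).le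
      _ = p' := hexp
  rw [hb, ← ENNReal.ofReal_add hs hc]
  exact sInf_le ⟨_, add_nonneg hs hc, hF, rfl⟩

lemma setLIntegral_Ioi_zero_eq_mul_comp_mul (φ : ℝ → ℝ≥0∞) {c : ℝ} (hc : 0 < c) :
    ∫⁻ r in Ioi 0, φ r = ENNReal.ofReal c * ∫⁻ r in Ioi 0, φ (c * r) := by
  have hemb : MeasurableEmbedding (c * ·) := (Homeomorph.mulLeft₀ c hc.ne').measurableEmbedding
  have hcomp : ∫⁻ r in Ioi 0, φ (c * r) = ENNReal.ofReal c⁻¹ * ∫⁻ r in Ioi 0, φ r := by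
    calc ∫⁻ r in Ioi 0, φ (c * r) = ∫⁻ r in (c * ·) ⁻¹' Ioi 0, φ (c * r) := by
          rw [preimage_const_mul_Ioi₀ 0 hc, zero_div]
      _ = ∫⁻ r in Ioi 0, φ r ∂(volume.map (c * ·)) := by
          rw [hemb.restrict_map, hemb.lintegral_map]
      _ = ENNReal.ofReal c⁻¹ * ∫⁻ r in Ioi 0, φ r := by
          rw [Real.map_volume_mul_left hc.ne', Measure.restrict_smul, lintegral_smul_measure,
            smul_eq_mul, abs_of_pos (inv_pos.2 hc)]
  rw [hcomp, ← mul_assoc, ← ENNReal.ofReal_mul hc.le, mul_inv_cancel₀ hc.ne', ENNReal.ofReal_one,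
    one_mul]

lemma log_le_inv_exp_one_mul {y : ℝ} (hy : 0 < y) : log y ≤ (exp 1)⁻¹ * y := by
  have h := log_le_sub_one_of_pos (div_pos hy (exp_pos 1))
  rw [log_div hy.ne' (exp_pos 1).ne', log_exp] at h
  rw [inv_mul_eq_div]
  linarith

section Balls

variable {X : Type*} [MetricSpace X] [Fintype X] {μ ν : X → ℝ}

lemma ballMass_mono (hμ : ∀ y, 0 ≤ μ y) (x : X) : Monotone (ballMass μ x) := fun _ _ h =>
  Finset.sum_le_sum_of_subset_of_nonneg
    (Finset.monotone_filter_right _ fun _ _ hy => hy.trans h) fun y _ _ => hμ y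

lemma ballMass_nonneg (hμ : ∀ y, 0 ≤ μ y) (x : X) (r : ℝ) : 0 ≤ ballMass μ x r :=
  Finset.sum_nonneg fun y _ => hμ y

lemma le_ballMass (hμ : ∀ y, 0 ≤ μ y) (x : X) {r : ℝ} (hr : 0 ≤ r) : μ x ≤ ballMass μ x r :=
  Finset.single_le_sum (fun y _ => hμ y) (by simp [hr])

lemma ballMass_le_one (hμ : IsProbOn μ) (x : X) (r : ℝ) : ballMass μ x r ≤ 1 :=
  hμ.2 ▸ Finset.sum_le_sum_of_subset_of_nonneg (Finset.filter_subset _ _) fun y _ _ => hμ.1 y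

lemma ballMass_eq_one (hμ : IsProbOn μ) (x : X) {r : ℝ} (hr : fdiam X ≤ r) :
    ballMass μ x r = 1 := by
  rw [← hμ.2, ballMass, Finset.filter_true_of_mem fun y _ =>
    (Metric.dist_le_diam_of_mem finite_univ.isBounded (mem_univ x) (mem_univ y)).trans hr]

def nbhdMass (μ : X → ℝ) (T : Finset X) (r : ℝ) : ℝ :=
  ∑ y with ∃ x ∈ T, dist x y ≤ r, μ y

lemma nbhdMass_le_one (hμ : IsProbOn μ) (T : Finset X) (r : ℝ) : nbhdMass μ T r ≤ 1 :=
  hμ.2 ▸ Finset.sum_le_sum_of_subset_of_nonneg (Finset.filter_subset _ _) fun y _ _ => hμ.1 y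

lemma ballMass_add_nbhdMass_le (hμ : ∀ y, 0 ≤ μ y) {x₀ : X} {T T' : Finset X} {r : ℝ}
    (hx₀ : x₀ ∈ T) (hT' : T' ⊆ T) (hfar : ∀ x ∈ T', 2 * r < dist x₀ x) :
    ballMass μ x₀ r + nbhdMass μ T' r ≤ nbhdMass μ T r := by
  classical
  rw [ballMass, nbhdMass, ← Finset.sum_union]
  · refine Finset.sum_le_sum_of_subset_of_nonneg (fun y hy => ?_) fun y _ _ => hμ y
    simp only [Finset.mem_union, Finset.mem_filter, Finset.mem_univ, true_and] at hy ⊢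
    rcases hy with hy | ⟨x, hx, hxy⟩
    exacts [⟨x₀, hx₀, hy⟩, ⟨x, hT' hx, hxy⟩]
  · refine Finset.disjoint_left.2 fun y hy₀ hy => ?_
    simp only [Finset.mem_filter, Finset.mem_univ, true_and] at hy₀ hy
    obtain ⟨x, hx, hxy⟩ := hy
    linarith [hfar x hx, dist_triangle_right x₀ x y]

end Balls

section LogRatio

variable {X : Type*} [MetricSpace X] [Fintype X] {μ ν : X → ℝ}

/-- `log⁺ (μ(B(x,r)) / ν(B(x,2r)))`: `ENNReal.ofReal` truncates at `0`, and the value is `0` when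
`ν(B(x,2r)) = 0` because `p / 0 = 0` and `log 0 = 0`. -/
def ballLogRatio (μ ν : X → ℝ) (x : X) (r : ℝ) : ℝ≥0∞ :=
  ENNReal.ofReal (log (ballMass μ x r / ballMass ν x (2 * r)))

lemma measurable_ballLogRatio (hμ : ∀ y, 0 ≤ μ y) (hν : ∀ y, 0 ≤ ν y) (x : X) :
    Measurable (ballLogRatio μ ν x) :=
  ((ballMass_mono hμ x).measurable.div
    ((ballMass_mono hν x).measurable.comp (measurable_const_mul 2))).log.ennreal_ofReal

lemma ballLogRatio_eq_zero_of_fdiam_le (hμ : IsProbOn μ) (hν : IsProbOn ν) (x : X) {r : ℝ}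
    (hr : fdiam X ≤ 2 * r) : ballLogRatio μ ν x r = 0 := by
  rw [ballLogRatio, ballMass_eq_one hν x hr, div_one]
  exact ENNReal.ofReal_eq_zero.2 (log_nonpos (ballMass_nonneg hμ.1 x r) (ballMass_le_one hμ x r))

lemma IsChainingDensity.chainFnE_le_add_ballLogRatio {f : ℝ → ℝ} (hf : IsChainingDensity f)
    {x : X} {r : ℝ} (hν : 0 < ballMass ν x (2 * r)) :
    chainFnE f (ballMass ν x (2 * r)) ≤ chainFnE f (ballMass μ x r) + ballLogRatio μ ν x r := by
  rcases lt_or_ge (ballMass ν x (2 * r)) (ballMass μ x r) with hlt | hge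
  · exact hf.chainFnE_le_add_log hν hlt.le
  · exact (chainFnE_antitone f hge).trans le_self_add

/-- A greedy Vitali-type covering argument: the point `x₀` with the largest ratio absorbs the
points of `T` within `2r` of it, and the `r`-balls around the remaining points miss `B(x₀, r)`. -/
lemma sum_mul_log_ballMass_div_le (hμ : ∀ y, 0 ≤ μ y) (hν : ∀ y, 0 ≤ ν y) {r : ℝ} (hr : 0 ≤ r)
    (T : Finset X)
    (hT : ∀ x ∈ T, 0 < ballMass ν x (2 * r) ∧ ballMass ν x (2 * r) < ballMass μ x r) :
    ∑ x ∈ T, ν x * log (ballMass μ x r / ballMass ν x (2 * r)) ≤ (exp 1)⁻¹ * nbhdMass μ T r := by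
  induction T using Finset.strongInduction with
  | H T ih =>
  rcases T.eq_empty_or_nonempty with rfl | hne
  · simp [nbhdMass]
  obtain ⟨x₀, hx₀, hmax⟩ :=
    T.exists_max_image (fun x => log (ballMass μ x r / ballMass ν x (2 * r))) hne
  obtain ⟨hν₀, hνμ₀⟩ := hT x₀ hx₀
  have hlog₀ : 0 ≤ log (ballMass μ x₀ r / ballMass ν x₀ (2 * r)) :=
    log_nonneg ((one_le_div hν₀).2 hνμ₀.le)
  have hnear : ∑ x ∈ T with dist x₀ x ≤ 2 * r, ν x * log (ballMass μ x r / ballMass ν x (2 * r))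
      ≤ (exp 1)⁻¹ * ballMass μ x₀ r := by
    calc _ ≤ ∑ x ∈ T with dist x₀ x ≤ 2 * r,
            ν x * log (ballMass μ x₀ r / ballMass ν x₀ (2 * r)) :=
          Finset.sum_le_sum fun x hx =>
            mul_le_mul_of_nonneg_left (hmax x (Finset.mem_filter.1 hx).1) (hν x)
      _ ≤ ballMass ν x₀ (2 * r) * log (ballMass μ x₀ r / ballMass ν x₀ (2 * r)) := by
          rw [← Finset.sum_mul]
          refine mul_le_mul_of_nonneg_right (Finset.sum_le_sum_of_subset_of_nonneg
            (Finset.filter_subset_filter _ (Finset.subset_univ T)) fun y _ _ => hν y) hlog₀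
      _ ≤ ballMass ν x₀ (2 * r) * ((exp 1)⁻¹ * (ballMass μ x₀ r / ballMass ν x₀ (2 * r))) :=
          mul_le_mul_of_nonneg_left (log_le_inv_exp_one_mul (div_pos (hν₀.trans hνμ₀) hν₀)) hν₀.le
      _ = (exp 1)⁻¹ * ballMass μ x₀ r := by field_simp
  have hfar := ih {x ∈ T | ¬dist x₀ x ≤ 2 * r} (Finset.filter_ssubset.2 ⟨x₀, hx₀, by simp [hr]⟩)
    fun x hx => hT x (Finset.mem_filter.1 hx).1
  rw [← Finset.sum_filter_add_sum_filter_not T (fun x => dist x₀ x ≤ 2 * r)]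
  calc _ ≤ (exp 1)⁻¹ * ballMass μ x₀ r + (exp 1)⁻¹ * nbhdMass μ {x ∈ T | ¬dist x₀ x ≤ 2 * r} r :=
        add_le_add hnear hfar
    _ ≤ _ := by
        rw [← mul_add]
        exact mul_le_mul_of_nonneg_left (ballMass_add_nbhdMass_le hμ hx₀ (Finset.filter_subset _ _)
          fun x hx => not_le.1 (Finset.mem_filter.1 hx).2) (by positivity)

lemma sum_mul_ballLogRatio_le (hμ : IsProbOn μ) (hν : ∀ y, 0 ≤ ν y) {r : ℝ} (hr : 0 ≤ r) :
    ∑ x, ENNReal.ofReal (ν x) * ballLogRatio μ ν x r ≤ ENNReal.ofReal (exp 1)⁻¹ := by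
  set T := Finset.univ.filter fun x =>
    0 < ballMass ν x (2 * r) ∧ ballMass ν x (2 * r) < ballMass μ x r
  have hT : ∀ x ∈ T, 0 < ballMass ν x (2 * r) ∧ ballMass ν x (2 * r) < ballMass μ x r :=
    fun x hx => by simpa [T] using hx
  have hout : ∀ x ∉ T, ballLogRatio μ ν x r = 0 := by
    intro x hx
    simp only [T, Finset.mem_filter, Finset.mem_univ, true_and, not_and, not_lt] at hx
    refine ENNReal.ofReal_eq_zero.2 (log_nonpos
      (div_nonneg (ballMass_nonneg hμ.1 x r) (ballMass_nonneg hν x _)) ?_)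
    rcases (ballMass_nonneg hν x (2 * r)).eq_or_lt with h0 | hpos
    · rw [← h0, div_zero]
      exact zero_le_one
    · exact div_le_one_of_le₀ (hx hpos) hpos.le
  calc ∑ x, ENNReal.ofReal (ν x) * ballLogRatio μ ν x r
      = ∑ x ∈ T, ENNReal.ofReal (ν x * log (ballMass μ x r / ballMass ν x (2 * r))) := by
        rw [← Finset.sum_subset (Finset.subset_univ T) fun x _ hx => by rw [hout x hx, mul_zero]]
        exact Finset.sum_congr rfl fun x _ => (ENNReal.ofReal_mul (hν x)).symm
    _ = ENNReal.ofReal (∑ x ∈ T, ν x * log (ballMass μ x r / ballMass ν x (2 * r))) :=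
        (ENNReal.ofReal_sum_of_nonneg fun x hx => mul_nonneg (hν x)
          (log_nonneg ((one_le_div (hT x hx).1).2 (hT x hx).2.le))).symm
    _ ≤ ENNReal.ofReal (exp 1)⁻¹ := ENNReal.ofReal_le_ofReal
        ((sum_mul_log_ballMass_div_le hμ.1 hν hr T hT).trans
          (mul_le_of_le_one_right (by positivity) (nbhdMass_le_one hμ T r)))

lemma lintegral_sum_mul_ballLogRatio_le (hμ : IsProbOn μ) (hν : IsProbOn ν) :
    ∫⁻ r in Ioi 0, ∑ x, ENNReal.ofReal (ν x) * ballLogRatio μ ν x r ≤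
      ENNReal.ofReal (exp 1)⁻¹ * ENNReal.ofReal (fdiam X / 2) := by
  calc _ ≤ ∫⁻ r in Ioi 0, (Iic (fdiam X / 2)).indicator (fun _ => ENNReal.ofReal (exp 1)⁻¹) r := by
        refine lintegral_mono_ae (ae_restrict_of_forall_mem measurableSet_Ioi fun r hr => ?_)
        by_cases hrD : r ≤ fdiam X / 2
        · rw [indicator_of_mem (mem_Iic.2 hrD)]
          exact sum_mul_ballLogRatio_le hμ hν.1 (le_of_lt hr)
        · rw [indicator_of_notMem (mt mem_Iic.1 hrD), Finset.sum_eq_zero fun x _ => by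
            rw [ballLogRatio_eq_zero_of_fdiam_le hμ hν x (by linarith [not_le.1 hrD]), mul_zero]]
    _ = ENNReal.ofReal (exp 1)⁻¹ * ENNReal.ofReal (fdiam X / 2) := by
        rw [lintegral_indicator_const measurableSet_Iic, Measure.restrict_apply measurableSet_Iic,
          inter_comm, Ioi_inter_Iic, Real.volume_Ioc, sub_zero]

lemma IsChainingDensity.Hint_le {f : ℝ → ℝ} (hf : IsChainingDensity f) (hμ : ∀ y, 0 ≤ μ y)
    (hν : ∀ y, 0 ≤ ν y) {x : X} (hx : 0 < ν x) :
    Hint f ν x ≤ 2 * Hint f μ x + 2 * ∫⁻ r in Ioi 0, ballLogRatio μ ν x r := by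
  have hanti : Antitone fun r => chainFnE f (ballMass μ x r) :=
    (chainFnE_antitone f).comp_monotone (ballMass_mono hμ x)
  calc Hint f ν x = 2 * ∫⁻ r in Ioi 0, chainFnE f (ballMass ν x (2 * r)) := by
        rw [Hint, setLIntegral_Ioi_zero_eq_mul_comp_mul _ two_pos, ENNReal.ofReal_ofNat]
    _ ≤ 2 * ∫⁻ r in Ioi 0, (chainFnE f (ballMass μ x r) + ballLogRatio μ ν x r) := by
        gcongr 2 * ?_
        refine lintegral_mono_ae (ae_restrict_of_forall_mem measurableSet_Ioi fun r hr => ?_)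
        exact hf.chainFnE_le_add_ballLogRatio (hx.trans_le (le_ballMass hν x (by
          linarith [mem_Ioi.1 hr])))
    _ = 2 * Hint f μ x + 2 * ∫⁻ r in Ioi 0, ballLogRatio μ ν x r := by
        rw [lintegral_add_left hanti.measurable, mul_add, Hint]

lemma IsChainingDensity.sum_mul_Hint_le {f : ℝ → ℝ} (hf : IsChainingDensity f)
    (hμ : IsProbOn μ) (hν : IsProbOn ν) :
    ∑ x, ENNReal.ofReal (ν x) * Hint f ν x ≤
      2 * ∑ x, ENNReal.ofReal (ν x) * Hint f μ x + ENNReal.ofReal (fdiam X / exp 1) := by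
  have hx : ∀ x, ENNReal.ofReal (ν x) * Hint f ν x ≤ 2 * (ENNReal.ofReal (ν x) * Hint f μ x) +
      2 * ∫⁻ r in Ioi 0, ENNReal.ofReal (ν x) * ballLogRatio μ ν x r := by
    intro x
    rcases (hν.1 x).eq_or_lt with h0 | hpos
    · simp [← h0]
    calc _ ≤ ENNReal.ofReal (ν x) *
          (2 * Hint f μ x + 2 * ∫⁻ r in Ioi 0, ballLogRatio μ ν x r) := by
          gcongr
          exact hf.Hint_le hμ.1 hν.1 hpos
      _ = _ := by
          rw [lintegral_const_mul' _ _ ENNReal.ofReal_ne_top]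
          ring
  have hdiam : 2 * (ENNReal.ofReal (exp 1)⁻¹ * ENNReal.ofReal (fdiam X / 2)) =
      ENNReal.ofReal (fdiam X / exp 1) := by
    rw [← ENNReal.ofReal_mul (by positivity), ← ENNReal.ofReal_ofNat 2,
      ← ENNReal.ofReal_mul zero_le_two]
    congr 1
    field_simp
  calc _ ≤ ∑ x, (2 * (ENNReal.ofReal (ν x) * Hint f μ x) +
          2 * ∫⁻ r in Ioi 0, ENNReal.ofReal (ν x) * ballLogRatio μ ν x r) :=
        Finset.sum_le_sum fun x _ => hx x
    _ = 2 * ∑ x, ENNReal.ofReal (ν x) * Hint f μ x +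
          2 * ∫⁻ r in Ioi 0, ∑ x, ENNReal.ofReal (ν x) * ballLogRatio μ ν x r := by
        rw [Finset.sum_add_distrib, ← Finset.mul_sum, ← Finset.mul_sum, lintegral_finsetSum _
          fun x _ => (measurable_ballLogRatio hμ.1 hν.1 x).const_mul _]
    _ ≤ _ := by
        rw [← hdiam]
        gcongr
        exact lintegral_sum_mul_ballLogRatio_le hμ hν

end LogRatio

/-- for every probability measure `ν` on a finite metric space `X`,
`Σ_x ν(x)·∫₀^∞ h(ν(B(x,r))) dr ≤ 2·inf_μ Σ_x ν(x)·∫₀^∞ h(μ(B(x,r))) dr + diam(X)/e`,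
the infimum being over all probability measures `μ` on `X`. -/
theorem stmt3 {X : Type*} [MetricSpace X] [Fintype X]
    (f : ℝ → ℝ) (hf : IsChainingDensity f) (ν : X → ℝ) (hν : IsProbOn ν) :
    (∑ x, ENNReal.ofReal (ν x) * Hint f ν x) ≤
      2 * (⨅ μ : {m : X → ℝ // IsProbOn m}, ∑ x, ENNReal.ofReal (ν x) * Hint f μ.1 x)
        + ENNReal.ofReal (fdiam X / Real.exp 1) := by
  rw [ENNReal.mul_iInf_of_ne two_ne_zero ENNReal.ofNat_ne_top, ENNReal.iInf_add]
  exact le_iInf fun μ => hf.sum_mul_Hint_le μ.2 hν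
end
end
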